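/- arXiv:2412.02716 — 3 statements merged into one kernel-verified Lean document; each statement's English description precedes it below -/
import Mathlib

section
/- Let η ∈ (0,1], η_h ∈ (0,1), HHV > 0, C_p > 0, P₀ ∈ ℝ with P₀ ≠ 0, and real numbers T_s, T_r with T_s ≠ T_r be given. Then there exists a unique tuple (P_{0e0c}, Q_{0e}, q_{0c0g}, q_{0g}, m_{0c0h}, m_{0h}, T^r_{0c0h}, T^s_{0h,l}, Δφ_{0h,l}, Δφ_{0c0h}) ∈ ℝ¹⁰ satisfying the electrolyser system with boundary conditions P_{0e} = P₀, Q_{0e0c} = 0, T^s_{0c0h} = T_s and T^r_{0h,l} = T_r; explicitly, P_{0e0c} = −P₀, Q_{0e} = 0, Δφ_{0c0h} = Δφ_{0h,l} = −η_h η P₀, q_{0c0g} = q_{0g} = −(1 − η_h) η P₀ / HHV, T^s_{0h,l} = T_s, T^r_{0c0h} = T_r, and m_{0c0h} = m_{0h} = −η_h η P₀ / (C_p (T_s − T_r)). Hence these boundary conditions make the electrolyser load-flow problem with known heat efficiency well-posed. -/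
/-!
The power balance gives `P_{0e0c} = -P₀`, and the heat-efficiency equation then fixes the heat
flux `Δφ_{0c0h} = -η_h η P₀`, which is nonzero. A nonzero heat flux forces a nonzero mass flow,
so the two temperature-mixing equations can be cancelled by it, giving `T^s_{0h,l} = T_s` and
`T^r_{0c0h} = T_r`. Every remaining equation is then linear in a single unknown.
-/

theorem temperatures_eq_of_heat_flux_ne_zero {R : Type*} [CommRing R] [IsDomain R]
    {Cp m Ts Tr T T' d : R} (hd : d ≠ 0) (hflux : Cp * m * (Ts - T) - d = 0)
    (hsupply : m * Ts - m * T' = 0) (hreturn : -(m * T) + m * Tr = 0) :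
    T' = Ts ∧ T = Tr := by
  have hm : m ≠ 0 := by
    rintro rfl
    exact hd (by linear_combination -hflux)
  exact ⟨mul_left_cancel₀ hm (by linear_combination -hsupply),
    mul_left_cancel₀ hm (by linear_combination -hreturn)⟩

/-- With boundary conditions `P_{0e} = P₀`, `Q_{0e0c} = 0`,
`T^s_{0c0h} = Ts`, `T^r_{0h,l} = Tr`, the electrolyser system with known heat
efficiency `η_h` has the unique solution given explicitly below. -/
theorem electrolyser_known_heat_eff_well_posed (η ηh HHV Cp P₀ Ts Tr : ℝ)
    (hη : 0 < η ∧ η ≤ 1) (hηh : 0 < ηh ∧ ηh < 1)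
    (hHHV : 0 < HHV) (hCp : 0 < Cp) (hP : P₀ ≠ 0) (hT : Ts ≠ Tr) :
    ∀ P0e0c Q0e q0c0g q0g m0c0h m0h Tr0c0h Tshl dφhl dφc : ℝ,
      (P₀ + P0e0c = 0 ∧
       Q0e + 0 = 0 ∧
       q0c0g - q0g = 0 ∧
       m0c0h - m0h = 0 ∧
       m0c0h * Ts - m0h * Tshl = 0 ∧
       -(m0c0h * Tr0c0h) + m0h * Tr = 0 ∧
       Cp * m0h * (Tshl - Tr) - dφhl = 0 ∧
       Cp * m0c0h * (Ts - Tr0c0h) - dφc = 0 ∧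
       η * P0e0c - HHV * q0c0g - dφc = 0 ∧
       ηh * η * P0e0c - dφc = 0)
      ↔
      (P0e0c = -P₀ ∧ Q0e = 0 ∧ dφc = -(ηh * η * P₀) ∧ dφhl = -(ηh * η * P₀) ∧
       q0c0g = -((1 - ηh) * η * P₀) / HHV ∧ q0g = -((1 - ηh) * η * P₀) / HHV ∧
       Tshl = Ts ∧ Tr0c0h = Tr ∧
       m0c0h = -(ηh * η * P₀) / (Cp * (Ts - Tr)) ∧
       m0h = -(ηh * η * P₀) / (Cp * (Ts - Tr))) := by
  intro P0e0c Q0e q0c0g q0g m0c0h m0h Tr0c0h Tshl dφhl dφc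
  have hflux : -(ηh * η * P₀) ≠ 0 :=
    neg_ne_zero.mpr (mul_ne_zero (mul_ne_zero hηh.1.ne' hη.1.ne') hP)
  have hCpT : Cp * (Ts - Tr) ≠ 0 := mul_ne_zero hCp.ne' (sub_ne_zero.mpr hT)
  constructor
  · rintro ⟨hPe, hQe, hgas, hmass, hsupply, hreturn, hφhl, hφc, hbalance, hheat⟩
    have hP0e0c : P0e0c = -P₀ := by linarith
    have hdφc : dφc = -(ηh * η * P₀) := by rw [hP0e0c] at hheat; linarith
    have hm0h : m0h = m0c0h := by linarith
    subst m0h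
    obtain ⟨hTshl, hTr0c0h⟩ :=
      temperatures_eq_of_heat_flux_ne_zero (hdφc ▸ hflux) hφc hsupply hreturn
    subst Tshl Tr0c0h
    have hm : m0c0h = -(ηh * η * P₀) / (Cp * (Ts - Tr)) := by
      rw [eq_div_iff hCpT]; linarith
    have hq : q0c0g = -((1 - ηh) * η * P₀) / HHV := by
      rw [eq_div_iff hHHV.ne']; rw [hP0e0c, hdφc] at hbalance; linarith
    exact ⟨hP0e0c, by linarith, hdφc, by linarith, hq, by linarith, rfl, rfl, hm, hm⟩
  · rintro ⟨rfl, rfl, rfl, rfl, rfl, rfl, rfl, rfl, rfl, rfl⟩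
    refine ⟨by ring, by ring, by ring, by ring, by ring, by ring, ?_, ?_, ?_, by ring⟩
    · field_simp; ring
    · field_simp; ring
    · field_simp; ring
end

section
/- Let η ∈ (0,1], HHV > 0, C_p > 0, and boundary data q₀ ≥ 0 (gas load), φ₀ > 0 (heat load), and real numbers T_s, T_r with T_s ≠ T_r be given. Then there exists a unique tuple (η_h, P_{0e}, P_{0e0c}, Q_{0e}, q_{0c0g}, m_{0c0h}, m_{0h}, T^r_{0c0h}, T^s_{0h,l}, Δφ_{0c0h}) ∈ ℝ¹⁰ satisfying the electrolyser system, where the heat efficiency η_h is treated as an unknown, with boundary conditions q_{0g} = q₀, Δφ_{0h,l} = φ₀, Q_{0e0c} = 0, T^s_{0c0h} = T_s and T^r_{0h,l} = T_r; explicitly, P_{0e0c} = (HHV · q₀ + φ₀)/η, P_{0e} = −P_{0e0c}, Q_{0e} = 0, η_h = φ₀/(HHV · q₀ + φ₀), q_{0c0g} = q₀, Δφ_{0c0h} = φ₀, T^s_{0h,l} = T_s, T^r_{0c0h} = T_r, and m_{0c0h} = m_{0h} = φ₀/(C_p (T_s − T_r)). Hence these boundary conditions make the electrolyser load-flow problem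 with unknown heat efficiency well-posed. -/
/-! The thermal equations decouple from the electrical ones. The heat load `φ₀ ≠ 0` forces a
nonzero mass flow, which can then be cancelled from the two temperature-mixing equations, so the
temperatures are transported unchanged and the flow is `φ₀ / (Cp (Ts - Tr))`. The electrical
side is then triangular: the power balance fixes `η P0e0c = HHV q₀ + φ₀ > 0`, and the heat
equation fixes `ηh` as the heat share of that power. -/

theorem heat_exchanger_iff {Cp φ Ts Tr Ts' Tr' m m' dφ : ℝ}
    (hCp : Cp ≠ 0) (hT : Ts ≠ Tr) (hφ : φ ≠ 0) :
    (m = m' ∧ m * Ts = m' * Ts' ∧ m * Tr' = m' * Tr ∧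
      Cp * m' * (Ts' - Tr) = φ ∧ Cp * m * (Ts - Tr') = dφ) ↔
    (dφ = φ ∧ Ts' = Ts ∧ Tr' = Tr ∧
      m = φ / (Cp * (Ts - Tr)) ∧ m' = φ / (Cp * (Ts - Tr))) := by
  have hCpT : Cp * (Ts - Tr) ≠ 0 := mul_ne_zero hCp (sub_ne_zero.2 hT)
  constructor
  · rintro ⟨rfl, hs, hr, hload, rfl⟩
    have hm : m ≠ 0 := by
      rintro rfl
      exact hφ (by simpa using hload.symm)
    obtain rfl : Ts = Ts' := mul_left_cancel₀ hm hs
    obtain rfl : Tr = Tr' := (mul_left_cancel₀ hm hr).symm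
    have hflow : m = φ / (Cp * (Ts - Tr)) := by
      rw [eq_div_iff hCpT, ← hload]
      ring
    exact ⟨hload, rfl, rfl, hflow, hflow⟩
  · rintro ⟨rfl, rfl, rfl, rfl, rfl⟩
    refine ⟨rfl, rfl, rfl, ?_, ?_⟩ <;> field_simp

theorem electrolyser_power_iff {η HHV q φ P ηh : ℝ}
    (hη : η ≠ 0) (hD : HHV * q + φ ≠ 0) :
    (η * P = HHV * q + φ ∧ ηh * η * P = φ) ↔
    (P = (HHV * q + φ) / η ∧ ηh = φ / (HHV * q + φ)) := by
  constructor
  · rintro ⟨hP, hheat⟩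
    refine ⟨by rw [eq_div_iff hη, ← hP, mul_comm], ?_⟩
    rw [eq_div_iff hD, ← hP, ← hheat, mul_assoc]
  · rintro ⟨rfl, rfl⟩
    constructor <;> field_simp

/-- Unknown heat efficiency case. With boundary conditions
`q_{0g} = q₀`, `Δφ_{0h,l} = φ₀`, `Q_{0e0c} = 0`, `T^s_{0c0h} = Ts`,
`T^r_{0h,l} = Tr`, the electrolyser system (with `η_h` an additional unknown)
has the unique solution given explicitly below. -/
theorem electrolyser_unknown_heat_eff_well_posed (η HHV Cp q₀ φ₀ Ts Tr : ℝ)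
    (hη : 0 < η ∧ η ≤ 1) (hHHV : 0 < HHV) (hCp : 0 < Cp)
    (hq : 0 ≤ q₀) (hφ : 0 < φ₀) (hT : Ts ≠ Tr) :
    ∀ ηh P0e P0e0c Q0e q0c0g m0c0h m0h Tr0c0h Tshl dφc : ℝ,
      (P0e + P0e0c = 0 ∧
       Q0e + 0 = 0 ∧
       q0c0g - q₀ = 0 ∧
       m0c0h - m0h = 0 ∧
       m0c0h * Ts - m0h * Tshl = 0 ∧
       -(m0c0h * Tr0c0h) + m0h * Tr = 0 ∧
       Cp * m0h * (Tshl - Tr) - φ₀ = 0 ∧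
       Cp * m0c0h * (Ts - Tr0c0h) - dφc = 0 ∧
       η * P0e0c - HHV * q0c0g - dφc = 0 ∧
       ηh * η * P0e0c - dφc = 0)
      ↔
      (P0e0c = (HHV * q₀ + φ₀) / η ∧ P0e = -P0e0c ∧ Q0e = 0 ∧
       ηh = φ₀ / (HHV * q₀ + φ₀) ∧
       q0c0g = q₀ ∧ dφc = φ₀ ∧ Tshl = Ts ∧ Tr0c0h = Tr ∧
       m0c0h = φ₀ / (Cp * (Ts - Tr)) ∧ m0h = φ₀ / (Cp * (Ts - Tr))) := by
  intro ηh P0e P0e0c Q0e q0c0g m0c0h m0h Tr0c0h Tshl dφc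
  have hD : HHV * q₀ + φ₀ ≠ 0 := by positivity
  have thermal := heat_exchanger_iff (m := m0c0h) (m' := m0h) (Ts' := Tshl) (Tr' := Tr0c0h)
    (dφ := dφc) hCp.ne' hT hφ.ne'
  have power := electrolyser_power_iff (P := P0e0c) (ηh := ηh) hη.1.ne' hD
  constructor
  · rintro ⟨hPe, hQ, hq0, hm, hs, hr, hload, hdφ, hP, hheat⟩
    obtain ⟨rfl, hTs, hTr, hflow, hflow'⟩ :=
      thermal.1 ⟨by linarith, by linarith, by linarith, by linarith, by linarith⟩
    obtain rfl : q0c0g = q₀ := by linarith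
    obtain ⟨hP, hηh⟩ := power.1 ⟨by linarith, by linarith⟩
    exact ⟨hP, by linarith, by linarith, hηh, rfl, rfl, hTs, hTr, hflow, hflow'⟩
  · rintro ⟨hP, rfl, rfl, hηh, rfl, rfl, hTs, hTr, hflow, hflow'⟩
    obtain ⟨hm, hs, hr, hload, hdφ⟩ := thermal.2 ⟨rfl, hTs, hTr, hflow, hflow'⟩
    obtain ⟨hP, hheat⟩ := power.2 ⟨hP, hηh⟩
    refine ⟨by ring, by ring, by ring, ?_, ?_, ?_, ?_, ?_, ?_, ?_⟩ <;> linarith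
end

section
/- Suppose real variables satisfy the electrolyser system with P₀ := P_{0e} ≠ 0, Q_{0e0c} = 0, η > 0, η_h > 0, and C_p ≠ 0. Then the heat-side mass flows are nonzero: m_{0c0h} = m_{0h} ≠ 0 and T^s_{0c0h} ≠ T^r_{0c0h}. -/
theorem electrolyser_nonzero_mass_flow_general
    (η ηh Cp P0e P0e0c m0c0h m0h
      Ts0c0h Tr0c0h dφc : ℝ)
    (h1 : P0e + P0e0c = 0)
    (h4 : m0c0h - m0h = 0)
    (h8 : Cp * m0c0h * (Ts0c0h - Tr0c0h) - dφc = 0)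
    (h10 : ηh * η * P0e0c - dφc = 0)
    (hP : P0e ≠ 0) (hη : 0 < η) (hηh : 0 < ηh) :
    m0c0h = m0h ∧ m0h ≠ 0 ∧ Ts0c0h ≠ Tr0c0h := by
  have hm : m0c0h = m0h := sub_eq_zero.mp h4
  have hP0e0c : P0e0c ≠ 0 := fun h ↦ hP (by simpa [h] using h1)
  have hheat : dφc ≠ 0 := by
    rw [← sub_eq_zero.mp h10]
    exact mul_ne_zero (mul_ne_zero hηh.ne' hη.ne') hP0e0c
  have hflow : Cp * m0c0h * (Ts0c0h - Tr0c0h) ≠ 0 := by rwa [sub_eq_zero.mp h8]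
  obtain ⟨hCm, hT⟩ := mul_ne_zero_iff.mp hflow
  exact ⟨hm, hm ▸ right_ne_zero_of_mul hCm, sub_ne_zero.mp hT⟩

/-- In the electrolyser system with `P_{0e} ≠ 0`, `Q_{0e0c} = 0`,
`η > 0`, `η_h > 0`, `C_p ≠ 0`, the heat-side mass flows are nonzero and the
coupling supply and return temperatures differ. -/
theorem electrolyser_nonzero_mass_flow
    (η ηh HHV Cp P0e P0e0c Q0e Q0e0c q0c0g q0g m0c0h m0h
      Ts0c0h Tr0c0h Tshl Trhl dφhl dφc : ℝ)
    (h1 : P0e + P0e0c = 0)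
    (h2 : Q0e + Q0e0c = 0)
    (h3 : q0c0g - q0g = 0)
    (h4 : m0c0h - m0h = 0)
    (h5 : m0c0h * Ts0c0h - m0h * Tshl = 0)
    (h6 : -(m0c0h * Tr0c0h) + m0h * Trhl = 0)
    (h7 : Cp * m0h * (Tshl - Trhl) - dφhl = 0)
    (h8 : Cp * m0c0h * (Ts0c0h - Tr0c0h) - dφc = 0)
    (h9 : η * P0e0c - HHV * q0c0g - dφc = 0)
    (h10 : ηh * η * P0e0c - dφc = 0)
    (hP : P0e ≠ 0) (hQ : Q0e0c = 0) (hη : 0 < η) (hηh : 0 < ηh) (hCp : Cp ≠ 0) :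
    m0c0h = m0h ∧ m0h ≠ 0 ∧ Ts0c0h ≠ Tr0c0h :=
  electrolyser_nonzero_mass_flow_general η ηh Cp P0e P0e0c m0c0h m0h Ts0c0h Tr0c0h dφc h1 h4 h8 h10
    hP hη hηh
end
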